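/- Let α > 0, a > 0, let κ₀ be the unique solution in (α/2, ∞) of (α/2)·exp(−2κa) = κ − α/2, and set ξ₀ := −κ₀². Define φ₀ : ℝ → ℝ by φ₀(x) := cosh(κ₀ x) for |x| ≤ a and φ₀(x) := cosh(κ₀ a)·exp(−κ₀(|x| − a)) for |x| > a. Then φ₀ is continuous, positive, bounded and square-integrable on ℝ, twice differentiable at every x ∉ {−a, a} with −φ₀''(x) = ξ₀ φ₀(x) there, its derivative has one-sided limits at ±a, and φ₀'(a+0) − φ₀'(a−0) = −αφ₀(a) and φ₀'(−a+0) − φ₀'(−a−0) = −αφ₀(−a). -/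

import Mathlib

open Filter Topology MeasureTheory

/-! On each of the intervals `(-∞, -a)`, `(-a, a)`, `(a, ∞)` the function `φ₀` is a combination
of `exp (κ₀ x)` and `exp (-κ₀ x)`, so it solves `φ'' = κ₀² φ` there. The one-sided limits of
`φ₀'` at `a` are `-κ₀ cosh (κ₀ a)` and `κ₀ sinh (κ₀ a)` (and their negatives at `-a`, by
evenness), so both jumps equal `-κ₀ exp (κ₀ a)`; the equation defining `κ₀` is exactly
`κ₀ exp (κ₀ a) = α cosh (κ₀ a)`. Square-integrability follows from
`φ₀ x ≤ cosh (κ₀ a) exp (κ₀ (a - |x|))`. -/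

open Real Set

theorem integrable_comp_abs_of_integrableOn_Ioi {E : Type*} [NormedAddCommGroup E] {f : ℝ → E}
    (hf : IntegrableOn f (Ioi 0)) : Integrable (fun x => f |x|) := by
  have hIoi : IntegrableOn (fun x => f |x|) (Ioi 0) :=
    hf.congr_fun (fun x hx => by rw [abs_of_pos hx]) measurableSet_Ioi
  have hIic : IntegrableOn (fun x => f |x|) (Iic 0) := by
    have hneg : MeasurableEmbedding fun x : ℝ => -x := (Homeomorph.neg ℝ).measurableEmbedding
    rw [← Measure.map_neg_eq_self (volume : Measure ℝ), hneg.integrableOn_map_iff]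
    simp_rw [Function.comp_def, abs_neg, neg_preimage, neg_Iic, neg_zero]
    exact (integrableOn_Ici_iff_integrableOn_Ioi (by simp)).2 hIoi
  rw [← integrableOn_univ, ← Iic_union_Ioi (a := (0 : ℝ))]
  exact hIic.union hIoi

theorem integrable_exp_neg_mul_abs {b : ℝ} (hb : 0 < b) :
    Integrable fun x : ℝ => exp (-b * |x|) :=
  integrable_comp_abs_of_integrableOn_Ioi (exp_neg_integrableOn_Ioi 0 hb)

section SmoothPieces

variable {f g g' g'' : ℝ → ℝ} {U : Set ℝ}

theorem eqOn_deriv_of_eqOn (hfg : EqOn f g U) (hU : IsOpen U)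
    (hg : ∀ y, HasDerivAt g (g' y) y) : EqOn (deriv f) g' U := fun y hy =>
  (hfg.deriv hU hy).trans (hg y).deriv

theorem differentiableAt_and_deriv_deriv_of_eqOn (hfg : EqOn f g U) (hU : IsOpen U)
    (hg : ∀ y, HasDerivAt g (g' y) y) (hg' : ∀ y, HasDerivAt g' (g'' y) y) {x : ℝ}
    (hx : x ∈ U) :
    DifferentiableAt ℝ f x ∧ DifferentiableAt ℝ (deriv f) x ∧ deriv (deriv f) x = g'' x := by
  have hdf := eqOn_deriv_of_eqOn hfg hU hg
  refine ⟨?_, ?_, (eqOn_deriv_of_eqOn hdf hU hg') hx⟩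
  · exact ((hfg.eventuallyEq_of_mem (hU.mem_nhds hx)).differentiableAt_iff).2
      (hg x).differentiableAt
  · exact ((hdf.eventuallyEq_of_mem (hU.mem_nhds hx)).differentiableAt_iff).2
      (hg' x).differentiableAt

theorem tendsto_deriv_of_eqOn (hfg : EqOn f g U) (hU : IsOpen U)
    (hg : ∀ y, HasDerivAt g (g' y) y) (hg'c : Continuous g') {x : ℝ} {s : Set ℝ}
    (hUs : U ∈ 𝓝[s] x) : Tendsto (deriv f) (𝓝[s] x) (𝓝 (g' x)) :=
  ((hg'c.tendsto x).mono_left nhdsWithin_le_nhds).congr'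
    (eventually_of_mem hUs fun _ hy => ((eqOn_deriv_of_eqOn hfg hU hg) hy).symm)

end SmoothPieces

noncomputable def expComb (κ p q x : ℝ) : ℝ := p * exp (κ * x) + q * exp (-(κ * x))

theorem hasDerivAt_expComb (κ p q x : ℝ) :
    HasDerivAt (expComb κ p q) (expComb κ (κ * p) (-(κ * q)) x) x := by
  have hlin : HasDerivAt (fun y => κ * y) κ x := by simpa using (hasDerivAt_id x).const_mul κ
  have hneg : HasDerivAt (fun y => -(κ * y)) (-κ) x := hlin.neg
  exact ((hlin.exp.const_mul p).add (hneg.exp.const_mul q)).congr_deriv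
    (by unfold expComb; ring)

theorem continuous_expComb (κ p q : ℝ) : Continuous (expComb κ p q) := by
  unfold expComb; fun_prop

-- The `min`/`max` form of the piecewise definition makes continuity a `fun_prop` goal.
noncomputable def groundState (κ a x : ℝ) : ℝ :=
  cosh (κ * min |x| a) * exp (-κ * max (|x| - a) 0)

theorem groundState_eq_ite (κ a x : ℝ) : groundState κ a x =
    if |x| ≤ a then cosh (κ * x) else cosh (κ * a) * exp (-κ * (|x| - a)) := by
  unfold groundState
  split_ifs with h
  · have hcosh : cosh (κ * |x|) = cosh (κ * x) := by
      rcases abs_choice x with hx | hx <;> simp [hx]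
    rw [min_eq_left h, max_eq_right (by linarith), hcosh, mul_zero, exp_zero, mul_one]
  · rw [min_eq_right (by linarith), max_eq_left (by linarith)]

theorem continuous_groundState (κ a : ℝ) : Continuous (groundState κ a) := by
  unfold groundState; fun_prop

theorem groundState_pos (κ a x : ℝ) : 0 < groundState κ a x :=
  mul_pos (cosh_pos _) (exp_pos _)

theorem groundState_le {κ a : ℝ} (hκ : 0 ≤ κ) (ha : 0 ≤ a) (x : ℝ) :
    groundState κ a x ≤ cosh (κ * a) * exp (κ * (a - |x|)) := by
  have hmin : 0 ≤ min |x| a := le_min (abs_nonneg x) ha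
  have hcosh : cosh (κ * min |x| a) ≤ cosh (κ * a) := by
    rw [cosh_le_cosh, abs_of_nonneg (mul_nonneg hκ hmin), abs_of_nonneg (mul_nonneg hκ ha)]
    exact mul_le_mul_of_nonneg_left (min_le_right _ _) hκ
  have hexp : exp (-κ * max (|x| - a) 0) ≤ exp (κ * (a - |x|)) := by
    rw [exp_le_exp]
    nlinarith [le_max_left (|x| - a) 0]
  exact mul_le_mul hcosh hexp (exp_pos _).le (cosh_pos _).le

theorem integrable_groundState {κ a : ℝ} (hκ : 0 < κ) (ha : 0 ≤ a) :
    Integrable (groundState κ a) := by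
  refine ((integrable_exp_neg_mul_abs hκ).const_mul (cosh (κ * a) * exp (κ * a))).mono'
    (continuous_groundState κ a).aestronglyMeasurable (Eventually.of_forall fun x => ?_)
  rw [norm_of_nonneg (groundState_pos κ a x).le, mul_assoc, ← exp_add]
  convert groundState_le hκ.le ha x using 3
  ring

theorem abs_groundState_le {κ a : ℝ} (hκ : 0 ≤ κ) (ha : 0 ≤ a) (x : ℝ) :
    |groundState κ a x| ≤ cosh (κ * a) * exp (κ * a) := by
  rw [abs_of_pos (groundState_pos κ a x)]
  refine (groundState_le hκ ha x).trans (mul_le_mul_of_nonneg_left ?_ (cosh_pos _).le)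
  exact exp_le_exp.2 (by nlinarith [abs_nonneg x])

theorem integrable_groundState_sq {κ a : ℝ} (hκ : 0 < κ) (ha : 0 ≤ a) :
    Integrable fun x => groundState κ a x ^ 2 := by
  simpa only [sq] using (integrable_groundState hκ ha).bdd_mul
    (continuous_groundState κ a).aestronglyMeasurable
    (Eventually.of_forall (abs_groundState_le hκ.le ha))

theorem groundState_eqOn_Ioo (κ a : ℝ) :
    EqOn (groundState κ a) (expComb κ (1 / 2) (1 / 2)) (Ioo (-a) a) := by
  intro x hx
  rw [groundState_eq_ite, if_pos (abs_le.2 ⟨hx.1.le, hx.2.le⟩), cosh_eq, expComb]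
  ring

theorem groundState_eqOn_Ioi (κ : ℝ) {a : ℝ} (ha : 0 ≤ a) :
    EqOn (groundState κ a) (expComb κ 0 (cosh (κ * a) * exp (κ * a))) (Ioi a) := by
  intro x hx
  have hx' : |x| = x := abs_of_pos (ha.trans_lt hx)
  rw [groundState_eq_ite, if_neg (by rw [hx']; exact not_le.2 hx), hx', expComb,
    mul_assoc, ← exp_add]
  ring_nf

theorem groundState_eqOn_Iio (κ : ℝ) {a : ℝ} (ha : 0 ≤ a) :
    EqOn (groundState κ a) (expComb κ (cosh (κ * a) * exp (κ * a)) 0) (Iio (-a)) := by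
  intro x hx
  have hx' : |x| = -x := abs_of_neg (by linarith [mem_Iio.1 hx])
  rw [groundState_eq_ite, if_neg (by rw [hx']; linarith [mem_Iio.1 hx]), hx', expComb,
    mul_assoc, ← exp_add]
  ring_nf

theorem groundState_ode (κ : ℝ) {a x : ℝ} (ha : 0 ≤ a) (hxl : x ≠ -a) (hxr : x ≠ a) :
    DifferentiableAt ℝ (groundState κ a) x ∧ DifferentiableAt ℝ (deriv (groundState κ a)) x ∧
      deriv (deriv (groundState κ a)) x = κ ^ 2 * groundState κ a x := by
  have key : ∀ {p q : ℝ} {U : Set ℝ}, IsOpen U → EqOn (groundState κ a) (expComb κ p q) U →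
      x ∈ U → DifferentiableAt ℝ (groundState κ a) x ∧
        DifferentiableAt ℝ (deriv (groundState κ a)) x ∧
        deriv (deriv (groundState κ a)) x = κ ^ 2 * groundState κ a x := by
    intro p q U hU hfg hx
    have hcoeff : expComb κ (κ * (κ * p)) (-(κ * -(κ * q))) x = κ ^ 2 * expComb κ p q x := by
      unfold expComb; ring
    rw [hfg hx, ← hcoeff]
    exact differentiableAt_and_deriv_deriv_of_eqOn hfg hU (hasDerivAt_expComb κ p q)
      (hasDerivAt_expComb κ _ _) hx
  rcases lt_or_gt_of_ne hxl with hx | hx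
  · exact key isOpen_Iio (groundState_eqOn_Iio κ ha) hx
  rcases lt_or_gt_of_ne hxr with hx' | hx'
  · exact key isOpen_Ioo (groundState_eqOn_Ioo κ a) ⟨hx, hx'⟩
  · exact key isOpen_Ioi (groundState_eqOn_Ioi κ ha) hx'

theorem groundState_self (κ : ℝ) {a : ℝ} (ha : 0 ≤ a) : groundState κ a a = cosh (κ * a) := by
  rw [groundState_eq_ite, if_pos (abs_of_nonneg ha).le]

theorem groundState_neg_self (κ : ℝ) {a : ℝ} (ha : 0 ≤ a) :
    groundState κ a (-a) = cosh (κ * a) := by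
  rw [groundState_eq_ite, if_pos (by rw [abs_neg, abs_of_nonneg ha]), mul_neg, cosh_neg]

theorem tendsto_deriv_groundState_nhdsGT (κ : ℝ) {a : ℝ} (ha : 0 ≤ a) :
    Tendsto (deriv (groundState κ a)) (𝓝[>] a) (𝓝 (-(κ * cosh (κ * a)))) := by
  convert tendsto_deriv_of_eqOn (groundState_eqOn_Ioi κ ha) isOpen_Ioi (hasDerivAt_expComb κ _ _)
    (continuous_expComb κ _ _) self_mem_nhdsWithin using 2
  rw [expComb, exp_neg]
  field_simp
  ring

theorem tendsto_deriv_groundState_nhdsLT {κ a : ℝ} (ha : 0 < a) :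
    Tendsto (deriv (groundState κ a)) (𝓝[<] a) (𝓝 (κ * sinh (κ * a))) := by
  convert tendsto_deriv_of_eqOn (groundState_eqOn_Ioo κ a) isOpen_Ioo (hasDerivAt_expComb κ _ _)
    (continuous_expComb κ _ _) (Ioo_mem_nhdsLT (by linarith)) using 2
  rw [expComb, sinh_eq]
  ring

theorem tendsto_deriv_groundState_nhdsGT_neg {κ a : ℝ} (ha : 0 < a) :
    Tendsto (deriv (groundState κ a)) (𝓝[>] (-a)) (𝓝 (-(κ * sinh (κ * a)))) := by
  convert tendsto_deriv_of_eqOn (groundState_eqOn_Ioo κ a) isOpen_Ioo (hasDerivAt_expComb κ _ _)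
    (continuous_expComb κ _ _) (Ioo_mem_nhdsGT (by linarith)) using 2
  rw [expComb, sinh_eq, mul_neg, neg_neg]
  ring

theorem tendsto_deriv_groundState_nhdsLT_neg (κ : ℝ) {a : ℝ} (ha : 0 ≤ a) :
    Tendsto (deriv (groundState κ a)) (𝓝[<] (-a)) (𝓝 (κ * cosh (κ * a))) := by
  convert tendsto_deriv_of_eqOn (groundState_eqOn_Iio κ ha) isOpen_Iio (hasDerivAt_expComb κ _ _)
    (continuous_expComb κ _ _) self_mem_nhdsWithin using 2
  rw [expComb, mul_neg, exp_neg]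
  field_simp
  ring

theorem mul_exp_eq_mul_cosh {α κ a : ℝ} (h : α / 2 * exp (-2 * κ * a) = κ - α / 2) :
    κ * exp (κ * a) = α * cosh (κ * a) := by
  have hexp : exp (-2 * κ * a) * exp (κ * a) = exp (-(κ * a)) := by
    rw [← exp_add]; ring_nf
  rw [cosh_eq]
  linear_combination (-exp (κ * a)) * h + α / 2 * hexp

/-- the explicit even function `φ₀` is the positive, bounded,
square-integrable ground-state eigenfunction, with eigenvalue `ξ₀ = −κ₀²`,
of the one-dimensional operator with two delta interactions of strength `α`
at `±a`. -/
theorem ground_state_eigenfunction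
    (α a κ₀ ξ₀ : ℝ) (hα : 0 < α) (ha : 0 < a)
    (hκ₀ : κ₀ ∈ Set.Ioi (α / 2) ∧
      (α / 2) * Real.exp (-2 * κ₀ * a) = κ₀ - α / 2)
    (hξ₀ : ξ₀ = -κ₀ ^ 2)
    (φ₀ : ℝ → ℝ)
    (hφ₀ : ∀ x : ℝ, φ₀ x =
      if |x| ≤ a then Real.cosh (κ₀ * x)
      else Real.cosh (κ₀ * a) * Real.exp (-κ₀ * (|x| - a))) :
    Continuous φ₀ ∧
    (∀ x : ℝ, 0 < φ₀ x) ∧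
    (∃ C : ℝ, ∀ x : ℝ, |φ₀ x| ≤ C) ∧
    Integrable (fun x : ℝ => (φ₀ x) ^ 2) ∧
    (∀ x : ℝ, x ≠ -a → x ≠ a →
      DifferentiableAt ℝ φ₀ x ∧ DifferentiableAt ℝ (deriv φ₀) x ∧
      -deriv (deriv φ₀) x = ξ₀ * φ₀ x) ∧
    (∃ Lpa Lma Lpb Lmb : ℝ,
      Tendsto (deriv φ₀) (𝓝[>] a) (𝓝 Lpa) ∧
      Tendsto (deriv φ₀) (𝓝[<] a) (𝓝 Lma) ∧
      Tendsto (deriv φ₀) (𝓝[>] (-a)) (𝓝 Lpb) ∧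
      Tendsto (deriv φ₀) (𝓝[<] (-a)) (𝓝 Lmb) ∧
      Lpa - Lma = -α * φ₀ a ∧
      Lpb - Lmb = -α * φ₀ (-a)) := by
  have hκ : 0 < κ₀ := (half_pos hα).trans hκ₀.1
  obtain rfl : φ₀ = groundState κ₀ a :=
    funext fun x => (hφ₀ x).trans (groundState_eq_ite κ₀ a x).symm
  have hjump := mul_exp_eq_mul_cosh hκ₀.2
  rw [← cosh_add_sinh] at hjump
  refine ⟨continuous_groundState κ₀ a, groundState_pos κ₀ a,
    ⟨_, abs_groundState_le hκ.le ha.le⟩, integrable_groundState_sq hκ ha.le,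
    fun x hxl hxr => ?_, _, _, _, _, tendsto_deriv_groundState_nhdsGT κ₀ ha.le,
    tendsto_deriv_groundState_nhdsLT ha, tendsto_deriv_groundState_nhdsGT_neg ha,
    tendsto_deriv_groundState_nhdsLT_neg κ₀ ha.le, ?_, ?_⟩
  · obtain ⟨hdiff, hdiff', hode⟩ := groundState_ode κ₀ ha.le hxl hxr
    exact ⟨hdiff, hdiff', by rw [hode, hξ₀]; ring⟩
  · rw [groundState_self κ₀ ha.le]
    linear_combination -hjump
  · rw [groundState_neg_self κ₀ ha.le]
    linear_combination -hjump
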